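/- arXiv:2410.20524 — 3 statements merged into one kernel-verified Lean document; each statement's English description precedes it below -/
import Mathlib

section
/- Let B be a skew left brace, n a natural number, and J, I₁, …, Iₙ pairwise distinct minimal ideals of B. Then J*(I₁+⋯+Iₙ) = {0} and (I₁+⋯+Iₙ)*J = {0}, where I₁+⋯+Iₙ denotes the additive subgroup of (B,+) generated by I₁ ∪ ⋯ ∪ Iₙ. -/
/-- A *skew left brace* is a set with two group structures `(B,+)` and `(B,∘)`
(the latter written multiplicatively) satisfying `a∘(b+c) = a∘b - a + a∘c`.
The two identity elements automatically coincide. -/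
class SkewLeftBrace (B : Type*) extends AddGroup B, Group B where
  mul_add_eq : ∀ a b c : B, a * (b + c) = a * b - a + a * c

namespace SkewLeftBrace

variable {B : Type*} [SkewLeftBrace B]

/-- The map `λ_a : b ↦ -a + a∘b`. -/
def lmap (a b : B) : B := -a + a * b

/-- The brace star operation `a*b := -a + a∘b - b`. -/
def bstar (a b : B) : B := -a + a * b - b

/-- `X*Y`: the additive subgroup generated by all `bstar x y`, `x ∈ X`, `y ∈ Y`,
regarded as a set. -/
def setStar (X Y : Set B) : Set B :=
  ↑(AddSubgroup.closure {z : B | ∃ x ∈ X, ∃ y ∈ Y, z = bstar x y})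

/-- Pointwise sum of two subsets. -/
def setSum (X Y : Set B) : Set B := {w : B | ∃ x ∈ X, ∃ y ∈ Y, w = x + y}

/-- `X^Z := {z + x - z : x ∈ X, z ∈ Z}`. -/
def setConj (X Z : Set B) : Set B := {w : B | ∃ x ∈ X, ∃ z ∈ Z, w = z + x + -z}

/-- An ideal of a skew left brace: a subgroup of `(B,+)` which is normal in both
`(B,+)` and `(B,∘)` and invariant under all the maps `λ_a`. -/
structure IsIdeal (I : Set B) : Prop where
  zero_mem : (0 : B) ∈ I
  add_mem : ∀ ⦃x y : B⦄, x ∈ I → y ∈ I → x + y ∈ I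
  neg_mem : ∀ ⦃x : B⦄, x ∈ I → -x ∈ I
  add_conj_mem : ∀ (b : B) ⦃x : B⦄, x ∈ I → b + x + -b ∈ I
  mul_mem : ∀ ⦃x y : B⦄, x ∈ I → y ∈ I → x * y ∈ I
  inv_mem : ∀ ⦃x : B⦄, x ∈ I → x⁻¹ ∈ I
  mul_conj_mem : ∀ (b : B) ⦃x : B⦄, x ∈ I → b * x * b⁻¹ ∈ I
  lmap_mem : ∀ (a : B) ⦃x : B⦄, x ∈ I → lmap a x ∈ I

/-- A minimal ideal: a nonzero ideal whose only sub-ideals are `{0}` and itself. -/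
def IsMinimalIdeal (I : Set B) : Prop :=
  IsIdeal I ∧ I ≠ {0} ∧ ∀ J : Set B, IsIdeal J → J ⊆ I → J = {0} ∨ J = I

theorem mul_zero' (a : B) : a * (0 : B) = a := by
  have h := SkewLeftBrace.mul_add_eq a (0 : B) (0 : B)
  rw [add_zero] at h
  have h2 : a * (0:B) - a = 0 := (right_eq_add.mp h)
  exact sub_eq_zero.mp h2

theorem zero_eq_one : (0 : B) = 1 := by
  have h := mul_zero' (1 : B)
  rw [one_mul] at h
  exact h

theorem IsIdeal.one_mem {I : Set B} (h : IsIdeal I) : (1 : B) ∈ I :=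
  (zero_eq_one (B := B)) ▸ h.zero_mem

variable (B) in
/-- A skew left brace is *semiprime* if `I*I ≠ {0}` for every nonzero ideal `I`. -/
def Semiprime : Prop := ∀ I : Set B, IsIdeal I → I ≠ {0} → setStar I I ≠ {0}

variable (B) in
/-- A skew left brace is *prime*... (and) *simple* if its only ideals are `{0}` and `B`,
and these are distinct. -/
def Simple : Prop :=
  ({0} : Set B) ≠ Set.univ ∧ ∀ I : Set B, IsIdeal I → I = {0} ∨ I = Set.univ

variable (B) in
/-- A skew left brace is *Artinian* if every descending chain of ideals stabilizes. -/
def Artinian : Prop :=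
  ∀ f : ℕ → Set B, (∀ n, IsIdeal (f n)) → (∀ n, f (n + 1) ⊆ f n) →
    ∃ N, ∀ n, N ≤ n → f n = f N

/-- The `*`-products of copies of a fixed set `I`. -/
inductive IsStarPowerOf (I : Set B) : Set B → Prop
  | base : IsStarPowerOf I I
  | star {X Y : Set B} : IsStarPowerOf I X → IsStarPowerOf I Y →
      IsStarPowerOf I (setStar X Y)

variable (B) in
/-- A skew left brace is *strongly semiprime* if for every nonzero ideal `I`, every
`*`-product of copies of `I` is nonzero. -/
def StronglySemiprime : Prop :=
  ∀ I : Set B, IsIdeal I → I ≠ {0} → ∀ X : Set B, IsStarPowerOf I X → X ≠ {0}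

/-- The `*`-products of nonzero ideals. -/
inductive IsStarProdOfNonzeroIdeals : Set B → Prop
  | ideal {I : Set B} : IsIdeal I → I ≠ {0} → IsStarProdOfNonzeroIdeals I
  | star {X Y : Set B} : IsStarProdOfNonzeroIdeals X → IsStarProdOfNonzeroIdeals Y →
      IsStarProdOfNonzeroIdeals (setStar X Y)

variable (B) in
/-- A skew left brace is *strongly prime* if every `*`-product of nonzero ideals is nonzero. -/
def StronglyPrime : Prop :=
  ∀ X : Set B, IsStarProdOfNonzeroIdeals X → X ≠ {0}

end SkewLeftBrace
namespace SkewLeftBrace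

variable {B : Type*} [SkewLeftBrace B]

/-- An ideal, regarded as a skew left brace with the restricted operations. -/
def IsIdeal.brace {I : Set B} (h : IsIdeal I) : SkewLeftBrace I :=
  letI : Zero I := ⟨⟨0, h.zero_mem⟩⟩
  letI : Add I := ⟨fun x y => ⟨x.1 + y.1, h.add_mem x.2 y.2⟩⟩
  letI : Neg I := ⟨fun x => ⟨-x.1, h.neg_mem x.2⟩⟩
  letI : One I := ⟨⟨1, h.one_mem⟩⟩
  letI : Mul I := ⟨fun x y => ⟨x.1 * y.1, h.mul_mem x.2 y.2⟩⟩
  letI : Inv I := ⟨fun x => ⟨x.1⁻¹, h.inv_mem x.2⟩⟩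
  { add := (· + ·)
    zero := 0
    neg := (- ·)
    nsmul := nsmulRec
    zsmul := zsmulRec
    add_assoc := fun a b c => Subtype.ext (add_assoc a.1 b.1 c.1)
    zero_add := fun a => Subtype.ext (zero_add a.1)
    add_zero := fun a => Subtype.ext (add_zero a.1)
    neg_add_cancel := fun a => Subtype.ext (neg_add_cancel a.1)
    mul := (· * ·)
    one := 1
    inv := (·⁻¹)
    npow := npowRec
    zpow := zpowRec
    mul_assoc := fun a b c => Subtype.ext (mul_assoc a.1 b.1 c.1)
    one_mul := fun a => Subtype.ext (one_mul a.1)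
    mul_one := fun a => Subtype.ext (mul_one a.1)
    inv_mul_cancel := fun a => Subtype.ext (inv_mul_cancel a.1)
    mul_add_eq := fun a b c =>
      Subtype.ext (by
        show a.1 * (b.1 + c.1) = a.1 * b.1 + -a.1 + a.1 * c.1
        rw [SkewLeftBrace.mul_add_eq, sub_eq_add_neg]) }

/-- The direct product of two skew left braces, with componentwise operations. -/
def prodBrace (B₁ B₂ : Type*) [SkewLeftBrace B₁] [SkewLeftBrace B₂] :
    SkewLeftBrace (B₁ × B₂) :=
  { (inferInstance : AddGroup (B₁ × B₂)), (inferInstance : Group (B₁ × B₂)) with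
    mul_add_eq := fun a b c =>
      Prod.ext (by simp [SkewLeftBrace.mul_add_eq]) (by simp [SkewLeftBrace.mul_add_eq]) }

/-- Two skew left braces are isomorphic if there is a bijection preserving `+` and `∘`. -/
def IsBraceIsomorphic (A C : Type*) [SkewLeftBrace A] [SkewLeftBrace C] : Prop :=
  ∃ f : A ≃ C, (∀ x y : A, f (x + y) = f x + f y) ∧ (∀ x y : A, f (x * y) = f x * f y)

/-- A group homomorphism from `(B₂,∘)` to the automorphism group `Aut(B₁,+,∘)` of the
skew left brace `B₁`, presented as an action `act : B₂ → B₁ → B₁` by skew left brace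
automorphisms. -/
structure BraceActionHom (B₂ B₁ : Type*) [SkewLeftBrace B₂] [SkewLeftBrace B₁] where
  act : B₂ → B₁ → B₁
  act_bijective : ∀ a : B₂, Function.Bijective (act a)
  act_add : ∀ (a : B₂) (x y : B₁), act a (x + y) = act a x + act a y
  act_mul : ∀ (a : B₂) (x y : B₁), act a (x * y) = act a x * act a y
  act_hom : ∀ (a b : B₂) (x : B₁), act (a * b) x = act a (act b x)
  act_one : ∀ x : B₁, act (1 : B₂) x = x

variable {B₁ B₂ : Type*} [SkewLeftBrace B₁] [SkewLeftBrace B₂]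

theorem BraceActionHom.act_one' (α : BraceActionHom B₂ B₁) (a : B₂) :
    α.act a (1 : B₁) = 1 := by
  have h := α.act_mul a 1 1
  rw [mul_one] at h
  exact mul_eq_left.mp h.symm

/-- The underlying type of the semidirect product of two skew left braces. -/
@[ext]
structure SDP (B₁ B₂ : Type*) where
  fst : B₁
  snd : B₂

/-- The semidirect product `B₁ ⋊_α B₂` of skew left braces: the additive group is the
direct product, while `(a₁,a₂) ∘ (b₁,b₂) = (a₁ ∘ α_{a₂}(b₁), a₂ ∘ b₂)`. -/
def BraceActionHom.sdp (α : BraceActionHom B₂ B₁) : SkewLeftBrace (SDP B₁ B₂) :=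
  letI : Zero (SDP B₁ B₂) := ⟨⟨0, 0⟩⟩
  letI : Add (SDP B₁ B₂) := ⟨fun p q => ⟨p.fst + q.fst, p.snd + q.snd⟩⟩
  letI : Neg (SDP B₁ B₂) := ⟨fun p => ⟨-p.fst, -p.snd⟩⟩
  letI : One (SDP B₁ B₂) := ⟨⟨1, 1⟩⟩
  letI : Mul (SDP B₁ B₂) := ⟨fun p q => ⟨p.fst * α.act p.snd q.fst, p.snd * q.snd⟩⟩
  letI : Inv (SDP B₁ B₂) := ⟨fun p => ⟨α.act p.snd⁻¹ p.fst⁻¹, p.snd⁻¹⟩⟩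
  { add := (· + ·)
    zero := 0
    neg := (- ·)
    nsmul := nsmulRec
    zsmul := zsmulRec
    add_assoc := fun a b c =>
      SDP.ext (add_assoc a.fst b.fst c.fst) (add_assoc a.snd b.snd c.snd)
    zero_add := fun a => SDP.ext (zero_add a.fst) (zero_add a.snd)
    add_zero := fun a => SDP.ext (add_zero a.fst) (add_zero a.snd)
    neg_add_cancel := fun a => SDP.ext (neg_add_cancel a.fst) (neg_add_cancel a.snd)
    mul := (· * ·)
    one := 1
    inv := (·⁻¹)
    npow := npowRec
    zpow := zpowRec
    mul_assoc := fun a b c =>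
      SDP.ext
        (by show (a.fst * α.act a.snd b.fst) * α.act (a.snd * b.snd) c.fst =
              a.fst * α.act a.snd (b.fst * α.act b.snd c.fst)
            rw [α.act_hom, α.act_mul, mul_assoc])
        (mul_assoc a.snd b.snd c.snd)
    one_mul := fun a =>
      SDP.ext (by show (1 : B₁) * α.act 1 a.fst = a.fst; rw [α.act_one, one_mul])
        (one_mul a.snd)
    mul_one := fun a =>
      SDP.ext (by show a.fst * α.act a.snd (1 : B₁) = a.fst; rw [α.act_one', mul_one])
        (mul_one a.snd)
    inv_mul_cancel := fun a =>
      SDP.ext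
        (by show α.act a.snd⁻¹ a.fst⁻¹ * α.act a.snd⁻¹ a.fst = 1
            rw [← α.act_mul, inv_mul_cancel, α.act_one'])
        (inv_mul_cancel a.snd)
    mul_add_eq := fun a b c =>
      SDP.ext
        (by show a.fst * α.act a.snd (b.fst + c.fst) =
              a.fst * α.act a.snd b.fst + -a.fst + a.fst * α.act a.snd c.fst
            rw [α.act_add, SkewLeftBrace.mul_add_eq, sub_eq_add_neg])
        (by show a.snd * (b.snd + c.snd) = a.snd * b.snd + -a.snd + a.snd * c.snd
            rw [SkewLeftBrace.mul_add_eq, sub_eq_add_neg]) }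

end SkewLeftBrace

open SkewLeftBrace

/-! By minimality, `J ∩ Iₖ = {0}`; as `J * Iₖ` and `Iₖ * J` lie in `J ∩ Iₖ`, every `λ_c` with
`c ∈ Iₖ` fixes `J` pointwise and every `λ_y` with `y ∈ J` fixes `Iₖ` pointwise. The second
property passes to the additive span of the `Iₖ` because each `λ_y` is additive. For the first,
the stabilizer of `J` is a subgroup of `(B,∘)`, and the additive span of a `λ`-invariant set
closed under negation lies in the subgroup of `(B,∘)` it generates, since
`a + b = a ∘ λ_{a⁻¹}(b)`. -/

namespace SkewLeftBrace

variable {B : Type*} [SkewLeftBrace B]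

theorem lmap_add (a b c : B) : lmap a (b + c) = lmap a b + lmap a c := by
  simp only [lmap, mul_add_eq, sub_eq_add_neg, add_assoc]

theorem lmap_zero (a : B) : lmap a 0 = 0 := by
  rw [lmap, mul_zero', neg_add_cancel]

theorem lmap_neg (a b : B) : lmap a (-b) = -lmap a b :=
  (neg_eq_of_add_eq_zero_right (by rw [← lmap_add, add_neg_cancel, lmap_zero])).symm

theorem lmap_one (b : B) : lmap 1 b = b := by
  rw [lmap, one_mul, ← zero_eq_one, neg_zero, zero_add]

theorem mul_eq_add_lmap (a b : B) : a * b = a + lmap a b := by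
  rw [lmap, add_neg_cancel_left]

theorem lmap_mul (a b c : B) : lmap (a * b) c = lmap a (lmap b c) := by
  apply add_left_cancel (a := a * b)
  rw [← mul_eq_add_lmap, mul_assoc, mul_eq_add_lmap a, mul_eq_add_lmap b, lmap_add,
    ← add_assoc, ← mul_eq_add_lmap]

theorem add_eq_mul_lmap_inv (a b : B) : a + b = a * lmap a⁻¹ b := by
  rw [mul_eq_add_lmap, ← lmap_mul, mul_inv_cancel, lmap_one]

theorem bstar_eq_lmap_sub (a b : B) : bstar a b = lmap a b - b := rfl

theorem bstar_eq_zero_iff (a b : B) : bstar a b = 0 ↔ lmap a b = b := by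
  rw [bstar_eq_lmap_sub, sub_eq_zero]

theorem setStar_eq_zero {X Y : Set B} (h : ∀ x ∈ X, ∀ y ∈ Y, bstar x y = 0) :
    setStar X Y = {0} := by
  rw [setStar, ← AddSubgroup.coe_bot, AddSubgroup.closure_eq_bot_iff.mpr]
  rintro z ⟨x, hx, y, hy, rfl⟩
  exact h x hx y hy

namespace IsIdeal

variable {I K : Set B}

theorem inter (hI : IsIdeal I) (hK : IsIdeal K) : IsIdeal (I ∩ K) where
  zero_mem := ⟨hI.zero_mem, hK.zero_mem⟩
  add_mem _ _ hx hy := ⟨hI.add_mem hx.1 hy.1, hK.add_mem hx.2 hy.2⟩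
  neg_mem _ hx := ⟨hI.neg_mem hx.1, hK.neg_mem hx.2⟩
  add_conj_mem b _ hx := ⟨hI.add_conj_mem b hx.1, hK.add_conj_mem b hx.2⟩
  mul_mem _ _ hx hy := ⟨hI.mul_mem hx.1 hy.1, hK.mul_mem hx.2 hy.2⟩
  inv_mem _ hx := ⟨hI.inv_mem hx.1, hK.inv_mem hx.2⟩
  mul_conj_mem b _ hx := ⟨hI.mul_conj_mem b hx.1, hK.mul_conj_mem b hx.2⟩
  lmap_mem a _ hx := ⟨hI.lmap_mem a hx.1, hK.lmap_mem a hx.2⟩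

theorem bstar_mem_right (hI : IsIdeal I) (a : B) {b : B} (hb : b ∈ I) : bstar a b ∈ I := by
  rw [bstar_eq_lmap_sub, sub_eq_add_neg]
  exact hI.add_mem (hI.lmap_mem a hb) (hI.neg_mem hb)

-- `a ∘ b = b + λ_b (b⁻¹ ∘ a ∘ b)` exhibits `bstar a b` as `-a` plus an additive conjugate of
-- an element of `I`.
theorem bstar_mem_left (hI : IsIdeal I) {a : B} (b : B) (ha : a ∈ I) : bstar a b ∈ I := by
  have hconj : b⁻¹ * a * b ∈ I := by simpa using hI.mul_conj_mem b⁻¹ ha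
  have hab : a * b = b + lmap b (b⁻¹ * a * b) := by rw [← mul_eq_add_lmap]; group
  rw [bstar, hab, sub_eq_add_neg, add_assoc]
  exact hI.add_mem (hI.neg_mem ha) (hI.add_conj_mem b (hI.lmap_mem b hconj))

theorem lmap_eq_of_inter_eq_zero (hI : IsIdeal I) (hK : IsIdeal K) (h : I ∩ K = {0})
    {a b : B} (ha : a ∈ I) (hb : b ∈ K) : lmap a b = b := by
  rw [← bstar_eq_zero_iff, ← Set.mem_singleton_iff, ← h]
  exact ⟨hI.bstar_mem_left b ha, hK.bstar_mem_right a hb⟩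

end IsIdeal

theorem IsMinimalIdeal.inter_eq_zero {I K : Set B} (hI : IsMinimalIdeal I)
    (hK : IsMinimalIdeal K) (hne : I ≠ K) : I ∩ K = {0} := by
  refine (hI.2.2 _ (hI.1.inter hK.1) Set.inter_subset_left).resolve_right fun hIK => ?_
  have hsub : I ⊆ K := Set.inter_eq_left.mp hIK
  exact (hK.2.2 I hI.1 hsub).elim hI.2.1 hne

def lmapStabilizer (J : Set B) : Subgroup B where
  carrier := {a | ∀ y ∈ J, lmap a y = y}
  one_mem' y _ := lmap_one y
  mul_mem' ha hb y hy := by rw [lmap_mul, hb y hy, ha y hy]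
  inv_mem' {a} ha y hy := by
    conv_lhs => rw [← ha y hy]
    rw [← lmap_mul, inv_mul_cancel, lmap_one]

def lmapFixed (J : Set B) : AddSubgroup B where
  carrier := {b | ∀ y ∈ J, lmap y b = b}
  zero_mem' y _ := lmap_zero y
  add_mem' ha hb y hy := by rw [lmap_add, ha y hy, hb y hy]
  neg_mem' ha y hy := by rw [lmap_neg, ha y hy]

-- Induct on `y` with the stronger claim that every `λ_a y` lies in `⟨S⟩_∘`, and use
-- `c + λ_a y = c ∘ λ_{c⁻¹ ∘ a} y` for `c = λ_a x ∈ S`.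
theorem addSubgroupClosure_subset_subgroupClosure {S : Set B}
    (hS : ∀ a, ∀ x ∈ S, lmap a x ∈ S) (hneg : ∀ x ∈ S, -x ∈ S) :
    (AddSubgroup.closure S : Set B) ⊆ Subgroup.closure S := by
  have step : ∀ x ∈ S, ∀ y, (∀ a, lmap a y ∈ Subgroup.closure S) →
      ∀ a, lmap a (x + y) ∈ Subgroup.closure S := by
    intro x hx y hy a
    rw [lmap_add, add_eq_mul_lmap_inv, ← lmap_mul]
    exact mul_mem (Subgroup.subset_closure (hS a x hx)) (hy _)
  intro y hy
  have key : ∀ a, lmap a y ∈ Subgroup.closure S := by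
    induction hy using AddSubgroup.closure_induction_left with
    | zero => intro a; rw [lmap_zero, zero_eq_one]; exact one_mem _
    | add_left x hx y _ ih => exact step x hx y ih
    | neg_add_cancel x hx y _ ih => exact step (-x) (hneg x hx) y ih
  simpa only [lmap_one, SetLike.mem_coe] using key 1

theorem setStar_addSubgroupClosure_iUnion_eq_zero {ι : Type*} {J : Set B} {I : ι → Set B}
    (hJ : IsIdeal J) (hI : ∀ k, IsIdeal (I k)) (hJI : ∀ k, J ∩ I k = {0}) :
    setStar J ↑(AddSubgroup.closure (⋃ k, I k)) = {0} ∧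
      setStar (↑(AddSubgroup.closure (⋃ k, I k)) : Set B) J = {0} := by
  have hmem : ∀ {x}, x ∈ ⋃ k, I k → ∃ k, x ∈ I k := Set.mem_iUnion.mp
  have hS : ∀ a, ∀ x ∈ ⋃ k, I k, lmap a x ∈ ⋃ k, I k := fun a _ hx =>
    have ⟨k, hx⟩ := hmem hx; Set.mem_iUnion.mpr ⟨k, (hI k).lmap_mem a hx⟩
  have hneg : ∀ x ∈ ⋃ k, I k, -x ∈ ⋃ k, I k := fun _ hx =>
    have ⟨k, hx⟩ := hmem hx; Set.mem_iUnion.mpr ⟨k, (hI k).neg_mem hx⟩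
  have hfixed : AddSubgroup.closure (⋃ k, I k) ≤ lmapFixed J :=
    (AddSubgroup.closure_le _).mpr fun _ hx y hy =>
      have ⟨k, hx⟩ := hmem hx; hJ.lmap_eq_of_inter_eq_zero (hI k) (hJI k) hy hx
  have hstab : (AddSubgroup.closure (⋃ k, I k) : Set B) ⊆ lmapStabilizer J :=
    (addSubgroupClosure_subset_subgroupClosure hS hneg).trans <|
      (Subgroup.closure_le _).mpr fun _ hx y hy =>
        have ⟨k, hx⟩ := hmem hx
        (hI k).lmap_eq_of_inter_eq_zero hJ (Set.inter_comm _ _ ▸ hJI k) hx hy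
  constructor <;> apply setStar_eq_zero <;> intro x hx y hy <;> rw [bstar_eq_zero_iff]
  · exact hfixed hy x hx
  · exact hstab hx y hy

end SkewLeftBrace

theorem star_with_sum_of_minimal_ideals_eq_zero_general {B : Type*} [SkewLeftBrace B]
    (n : ℕ) (J : Set B) (I : Fin n → Set B)
    (hJ : IsMinimalIdeal J) (hI : ∀ k, IsMinimalIdeal (I k))
    (hJI : ∀ k, J ≠ I k) :
    setStar J ↑(AddSubgroup.closure (⋃ k, I k)) = {0} ∧
      setStar (↑(AddSubgroup.closure (⋃ k, I k)) : Set B) J = {0} :=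
  setStar_addSubgroupClosure_iUnion_eq_zero hJ.1 (fun k => (hI k).1)
    fun k => hJ.inter_eq_zero (hI k) (hJI k)

/-- If `J, I₁, …, Iₙ` are pairwise distinct minimal ideals of a skew left brace `B`,
then `J*(I₁+⋯+Iₙ) = {0}` and `(I₁+⋯+Iₙ)*J = {0}`. -/
theorem star_with_sum_of_minimal_ideals_eq_zero {B : Type*} [SkewLeftBrace B]
    (n : ℕ) (J : Set B) (I : Fin n → Set B)
    (hJ : IsMinimalIdeal J) (hI : ∀ k, IsMinimalIdeal (I k))
    (hJI : ∀ k, J ≠ I k) (hII : ∀ k l : Fin n, k ≠ l → I k ≠ I l) :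
    setStar J ↑(AddSubgroup.closure (⋃ k, I k)) = {0} ∧
      setStar (↑(AddSubgroup.closure (⋃ k, I k)) : Set B) J = {0} :=
  star_with_sum_of_minimal_ideals_eq_zero_general n J I hJ hI hJI
end

section
/- Let B be a skew left brace, n > 1 a natural number, and I₁, …, Iₙ pairwise distinct minimal ideals of B. Then for all i₁, j₁ ∈ I₁, …, iₙ, jₙ ∈ Iₙ, the element (i₁+⋯+iₙ)*(j₁+⋯+jₙ) belongs to the set (I₁*I₁) + (I₂*I₂)^{I₁} + (I₃*I₃)^{I₁+I₂} + ⋯ + (Iₙ*Iₙ)^{I₁+⋯+I_{n−1}}. -/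
open SkewLeftBrace

/-! For ideals `I`, `J` and `u ∈ I`, `v ∈ J`, both `bstar u v` and the additive commutator
`u + v - u - v` lie in `I ∩ J`, which is `0` when `I`, `J` are distinct minimal ideals. So such
`u`, `v` commute additively and `u ∘ v = u + v`. Splitting off the first summands then gives
`bstar (x + S) (y + T) = bstar x y + bstar S T`, hence the star of the two sums is the sum of
the stars `bstar (i k) (j k) ∈ I k * I k`, each conjugated by `0`. -/

namespace SkewLeftBrace

variable {B : Type*} [SkewLeftBrace B]

theorem mul_eq_add_bstar_add (a b : B) : a * b = a + bstar a b + b := by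
  simp [bstar, sub_eq_add_neg, add_assoc]

theorem mul_eq_add_of_bstar_eq_zero {a b : B} (h : bstar a b = 0) : a * b = a + b := by
  rw [mul_eq_add_bstar_add, h, add_zero]

theorem bstar_zero_right (a : B) : bstar a 0 = 0 := by
  rw [bstar, mul_zero', sub_zero, neg_add_cancel]

theorem bstar_zero_left (b : B) : bstar 0 b = 0 := by
  rw [bstar, zero_eq_one, one_mul, ← zero_eq_one, neg_zero, zero_add, sub_self]

theorem bstar_add_right (a b c : B) : bstar a (b + c) = bstar a b + b + bstar a c - b := by
  simp only [bstar, mul_add_eq, sub_eq_add_neg, neg_add_rev, add_assoc, neg_add_cancel_left]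

theorem bstar_add_right_eq_zero {a b c : B} (hb : bstar a b = 0) (hc : bstar a c = 0) :
    bstar a (b + c) = 0 := by
  rw [bstar_add_right, hb, hc, zero_add, add_zero, sub_self]

theorem bstar_add_left_eq_zero {a b c : B} (hab : bstar a b = 0) (hac : bstar a c = 0)
    (hbc : bstar b c = 0) : bstar (a + b) c = 0 := by
  have habc : (a + b) * c = a + (b + c) := calc
    (a + b) * c = a * (b * c) := by rw [← mul_eq_add_of_bstar_eq_zero hab, mul_assoc]
    _ = a * (b + c) := by rw [mul_eq_add_of_bstar_eq_zero hbc]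
    _ = a + (b + c) := mul_eq_add_of_bstar_eq_zero (bstar_add_right_eq_zero hab hac)
  rw [bstar, habc, ← add_assoc a, neg_add_cancel_left, sub_self]

theorem bstar_list_sum_right_eq_zero (a : B) :
    ∀ l : List B, (∀ b ∈ l, bstar a b = 0) → bstar a l.sum = 0
  | [], _ => bstar_zero_right a
  | b :: l, h => by
    rw [List.sum_cons]
    exact bstar_add_right_eq_zero (h b (by simp))
      (bstar_list_sum_right_eq_zero a l fun c hc => h c (by simp [hc]))

theorem bstar_list_sum_left_eq_zero (c : B) :
    ∀ l : List B, l.Pairwise (fun a b => bstar a b = 0) → (∀ a ∈ l, bstar a c = 0) →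
      bstar l.sum c = 0
  | [], _, _ => bstar_zero_left c
  | a :: l, hl, h => by
    obtain ⟨ha, hl⟩ := List.pairwise_cons.mp hl
    rw [List.sum_cons]
    exact bstar_add_left_eq_zero (bstar_list_sum_right_eq_zero a l ha) (h a (by simp))
      (bstar_list_sum_left_eq_zero c l hl fun b hb => h b (by simp [hb]))

/-- The inductive step of `bstar_list_ofFn_sum`: `x, y` come from one ideal, while `S, T` are
sums of elements of the others. -/
theorem bstar_add_add {x y S T Z : B} (hZ : bstar S T = Z) (hxS : bstar x S = 0)
    (hxT : bstar x T = 0) (hxZ : bstar x Z = 0) (hSy : bstar S y = 0) (hyZ : AddCommute y Z) :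
    bstar (x + S) (y + T) = bstar x y + Z := by
  have hS : S * (y + T) = S + (y + (Z + T)) := by
    rw [mul_add_eq, mul_eq_add_of_bstar_eq_zero hSy, mul_eq_add_bstar_add S T, hZ]
    simp only [sub_eq_add_neg, add_assoc, neg_add_cancel_left]
  have hx : x * (S + (y + (Z + T))) = x + (S + (-x + (x * y + (Z + T)))) := by
    rw [mul_add_eq x S, mul_add_eq x y, mul_add_eq x Z, mul_eq_add_of_bstar_eq_zero hxS,
      mul_eq_add_of_bstar_eq_zero hxZ, mul_eq_add_of_bstar_eq_zero hxT]
    simp only [sub_eq_add_neg, add_assoc, neg_add_cancel_left]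
  rw [bstar, ← mul_eq_add_of_bstar_eq_zero hxS, mul_assoc, hS, hx,
    mul_eq_add_of_bstar_eq_zero hxS]
  simp only [bstar, sub_eq_add_neg, neg_add_rev, add_assoc, neg_add_cancel_left,
    add_neg_cancel_left, (hyZ.neg_left.eq)]

theorem IsIdeal.inter_s4 {I J : Set B} (hI : IsIdeal I) (hJ : IsIdeal J) : IsIdeal (I ∩ J) where
  zero_mem := ⟨hI.zero_mem, hJ.zero_mem⟩
  add_mem _ _ hx hy := ⟨hI.add_mem hx.1 hy.1, hJ.add_mem hx.2 hy.2⟩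
  neg_mem _ hx := ⟨hI.neg_mem hx.1, hJ.neg_mem hx.2⟩
  add_conj_mem b _ hx := ⟨hI.add_conj_mem b hx.1, hJ.add_conj_mem b hx.2⟩
  mul_mem _ _ hx hy := ⟨hI.mul_mem hx.1 hy.1, hJ.mul_mem hx.2 hy.2⟩
  inv_mem _ hx := ⟨hI.inv_mem hx.1, hJ.inv_mem hx.2⟩
  mul_conj_mem b _ hx := ⟨hI.mul_conj_mem b hx.1, hJ.mul_conj_mem b hx.2⟩
  lmap_mem a _ hx := ⟨hI.lmap_mem a hx.1, hJ.lmap_mem a hx.2⟩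

theorem IsMinimalIdeal.inter_subset_zero {I J : Set B} (hI : IsMinimalIdeal I)
    (hJ : IsMinimalIdeal J) (hIJ : I ≠ J) : I ∩ J ⊆ {0} := by
  rcases hI.2.2 (I ∩ J) (hI.1.inter_s4 hJ.1) Set.inter_subset_left with h | h
  · exact h.subset
  · rcases hJ.2.2 I hI.1 (h ▸ Set.inter_subset_right) with h' | h'
    · exact absurd h' hI.2.1
    · exact absurd h' hIJ

theorem IsIdeal.bstar_mem_right_s4 {I : Set B} (hI : IsIdeal I) (a : B) {b : B} (hb : b ∈ I) :
    bstar a b ∈ I := by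
  rw [bstar, sub_eq_add_neg]
  exact hI.add_mem (hI.lmap_mem a hb) (hI.neg_mem hb)

theorem IsIdeal.bstar_mem_left_s4 {I : Set B} (hI : IsIdeal I) {a : B} (ha : a ∈ I) (b : B) :
    bstar a b ∈ I := by
  -- `a ∘ b = b ∘ (b⁻¹ ∘ a ∘ b) = b + λ_b (b⁻¹ ∘ a ∘ b)`
  have hab : a * b = b + lmap b (b⁻¹ * a * b⁻¹⁻¹) := by
    rw [lmap, add_neg_cancel_left]
    group
  rw [bstar, hab, sub_eq_add_neg, add_assoc]
  exact hI.add_mem (hI.neg_mem ha) (hI.add_conj_mem b (hI.lmap_mem b (hI.mul_conj_mem _ ha)))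

theorem bstar_eq_zero_of_inter_subset_zero {I J : Set B} (hI : IsIdeal I) (hJ : IsIdeal J)
    (hIJ : I ∩ J ⊆ {0}) {u v : B} (hu : u ∈ I) (hv : v ∈ J) : bstar u v = 0 :=
  hIJ ⟨hI.bstar_mem_left_s4 hu v, hJ.bstar_mem_right_s4 u hv⟩

theorem addCommute_of_inter_subset_zero {I J : Set B} (hI : IsIdeal I) (hJ : IsIdeal J)
    (hIJ : I ∩ J ⊆ {0}) {u v : B} (hu : u ∈ I) (hv : v ∈ J) : AddCommute u v := by
  have hcomm : u + v + -u + -v = 0 := hIJ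
    ⟨by simpa only [add_assoc] using hI.add_mem hu (hI.add_conj_mem v (hI.neg_mem hu)),
      hJ.add_mem (hJ.add_conj_mem u hv) (hJ.neg_mem hv)⟩
  rw [add_neg_eq_zero, add_neg_eq_iff_eq_add] at hcomm
  exact hcomm

theorem bstar_list_ofFn_sum : ∀ {n : ℕ} (I : Fin n → Set B), (∀ k, IsIdeal (I k)) →
    Pairwise (fun k l => I k ∩ I l ⊆ {0}) → ∀ (a b : Fin n → B), (∀ k, a k ∈ I k) →
      (∀ k, b k ∈ I k) →
      bstar (List.ofFn a).sum (List.ofFn b).sum = (List.ofFn fun k => bstar (a k) (b k)).sum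
  | 0, _, _, _, _, _, _, _ => bstar_zero_left 0
  | n + 1, I, hI, hIJ, a, b, ha, hb => by
    have htail {c : Fin (n + 1) → B} (hc : ∀ k, c k ∈ I k) :
        ∀ v ∈ List.ofFn (fun k => c k.succ), ∀ u ∈ I 0,
          bstar u v = 0 ∧ bstar v u = 0 ∧ AddCommute u v := by
      intro v hv u hu
      obtain ⟨k, rfl⟩ := List.mem_ofFn.mp hv
      have hk := hIJ (Fin.succ_ne_zero k).symm
      exact ⟨bstar_eq_zero_of_inter_subset_zero (hI 0) (hI _) hk hu (hc k.succ),
        bstar_eq_zero_of_inter_subset_zero (hI _) (hI 0) (Set.inter_comm .. ▸ hk) (hc k.succ) hu,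
        addCommute_of_inter_subset_zero (hI 0) (hI _) hk hu (hc k.succ)⟩
    have hbstar_mem k : bstar (a k) (b k) ∈ I k := (hI k).bstar_mem_right_s4 _ (hb k)
    have hpairwise : (List.ofFn fun k => a k.succ).Pairwise (fun u v => bstar u v = 0) :=
      List.pairwise_ofFn.mpr fun k l hkl => bstar_eq_zero_of_inter_subset_zero (hI _) (hI _)
        (hIJ ((Fin.succ_injective n).ne hkl.ne)) (ha k.succ) (ha l.succ)
    simp only [List.ofFn_succ, List.sum_cons]
    exact bstar_add_add
      (bstar_list_ofFn_sum (fun k => I k.succ) (fun k => hI k.succ)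
        (hIJ.comp_of_injective (Fin.succ_injective n)) _ _ (fun k => ha k.succ)
        (fun k => hb k.succ))
      (bstar_list_sum_right_eq_zero _ _ fun v hv => (htail ha v hv _ (ha 0)).1)
      (bstar_list_sum_right_eq_zero _ _ fun v hv => (htail hb v hv _ (ha 0)).1)
      (bstar_list_sum_right_eq_zero _ _ fun v hv => (htail hbstar_mem v hv _ (ha 0)).1)
      (bstar_list_sum_left_eq_zero _ _ hpairwise fun v hv => (htail ha v hv _ (hb 0)).2.1)
      (AddCommute.list_sum_right _ _ fun v hv => (htail hbstar_mem v hv _ (hb 0)).2.2)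

end SkewLeftBrace

theorem star_of_sums_mem_general {B : Type*} [SkewLeftBrace B]
    (n : ℕ) (I : Fin n → Set B)
    (hI : ∀ k, IsMinimalIdeal (I k)) (hII : ∀ k l : Fin n, k ≠ l → I k ≠ I l)
    (i j : Fin n → B) (hi : ∀ k, i k ∈ I k) (hj : ∀ k, j k ∈ I k) :
    ∃ t : Fin n → B,
      (∀ k, t k ∈ setConj (setStar (I k) (I k))
          (↑(AddSubgroup.closure {b : B | ∃ l : Fin n, l < k ∧ b ∈ I l}) : Set B)) ∧
      bstar (List.ofFn i).sum (List.ofFn j).sum = (List.ofFn t).sum := by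
  refine ⟨fun k => bstar (i k) (j k), fun k => ?_, ?_⟩
  · refine ⟨_, AddSubgroup.subset_closure ⟨i k, hi k, j k, hj k, rfl⟩, 0,
      AddSubgroup.zero_mem _, ?_⟩
    rw [zero_add, neg_zero, add_zero]
  · exact bstar_list_ofFn_sum I (fun k => (hI k).1)
      (fun k l hkl => (hI k).inter_subset_zero (hI l) (hII k l hkl)) i j hi hj

/-- For pairwise distinct minimal ideals `I₁, …, Iₙ` (`n > 1`) and elements
`i_k, j_k ∈ I_k`, the element `(i₁+⋯+iₙ)*(j₁+⋯+jₙ)` lies in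
`(I₁*I₁) + (I₂*I₂)^{I₁} + ⋯ + (Iₙ*Iₙ)^{I₁+⋯+I_{n-1}}`. -/
theorem star_of_sums_mem {B : Type*} [SkewLeftBrace B]
    (n : ℕ) (hn : 1 < n) (I : Fin n → Set B)
    (hI : ∀ k, IsMinimalIdeal (I k)) (hII : ∀ k l : Fin n, k ≠ l → I k ≠ I l)
    (i j : Fin n → B) (hi : ∀ k, i k ∈ I k) (hj : ∀ k, j k ∈ I k) :
    ∃ t : Fin n → B,
      (∀ k, t k ∈ setConj (setStar (I k) (I k))
          (↑(AddSubgroup.closure {b : B | ∃ l : Fin n, l < k ∧ b ∈ I l}) : Set B)) ∧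
      bstar (List.ofFn i).sum (List.ofFn j).sum = (List.ofFn t).sum :=
  star_of_sums_mem_general n I hI hII i j hi hj
end

section
/- Let B₁ and B₂ be strongly semiprime skew left braces and α a group homomorphism from (B₂,∘) to Aut(B₁,+,∘). Then the semidirect product B₁ ⋊_α B₂ is a strongly semiprime skew left brace. -/
open SkewLeftBrace

/-!
If the ideal `I` of `B₁ ⋊_α B₂` has nonzero image under the projection onto `B₂`, which is a
surjective brace homomorphism, then the images of the `*`-powers of `I` are the `*`-powers of
that nonzero ideal of `B₂`, hence nonzero. Otherwise `I` lies in the copy `B₁ × {0}` of `B₁`,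
and its `*`-powers are the images, under this injective brace homomorphism, of the `*`-powers
of the nonzero ideal of `B₁` it corresponds to.
-/

namespace SkewLeftBrace

variable {A C : Type*} [SkewLeftBrace A] [SkewLeftBrace C]

structure IsBraceHom (f : A → C) : Prop where
  map_add : ∀ x y, f (x + y) = f x + f y
  map_mul : ∀ x y, f (x * y) = f x * f y

namespace IsBraceHom

variable {f : A → C} (hf : IsBraceHom f)
include hf

def toAddMonoidHom : A →+ C := AddMonoidHom.mk' f hf.map_add

def toMonoidHom : A →* C := MonoidHom.mk' f hf.map_mul

theorem map_zero : f 0 = 0 := hf.toAddMonoidHom.map_zero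

theorem map_neg (x : A) : f (-x) = -f x := hf.toAddMonoidHom.map_neg x

theorem map_inv (x : A) : f x⁻¹ = (f x)⁻¹ := hf.toMonoidHom.map_inv x

theorem map_lmap (a x : A) : f (lmap a x) = lmap (f a) (f x) := by
  simp only [lmap, hf.map_add, hf.map_neg, hf.map_mul]

theorem map_bstar (x y : A) : f (bstar x y) = bstar (f x) (f y) := by
  simp only [bstar, sub_eq_add_neg, hf.map_add, hf.map_neg, hf.map_mul]

theorem image_setStar (X Y : Set A) : f '' setStar X Y = setStar (f '' X) (f '' Y) := by
  have hgen : f '' {z | ∃ x ∈ X, ∃ y ∈ Y, z = bstar x y} =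
      {z | ∃ x ∈ f '' X, ∃ y ∈ f '' Y, z = bstar x y} := by
    ext w
    constructor
    · rintro ⟨z, ⟨x, hx, y, hy, rfl⟩, rfl⟩
      exact ⟨f x, ⟨x, hx, rfl⟩, f y, ⟨y, hy, rfl⟩, hf.map_bstar x y⟩
    · rintro ⟨_, ⟨x, hx, rfl⟩, _, ⟨y, hy, rfl⟩, rfl⟩
      exact ⟨bstar x y, ⟨x, hx, y, hy, rfl⟩, hf.map_bstar x y⟩
  rw [setStar, setStar, ← hgen]
  exact (AddSubgroup.coe_map hf.toAddMonoidHom _).symm.trans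
    (congrArg SetLike.coe (AddMonoidHom.map_closure _ _))

theorem isIdeal_image (hs : Function.Surjective f) {I : Set A} (hI : IsIdeal I) :
    IsIdeal (f '' I) where
  zero_mem := ⟨0, hI.zero_mem, hf.map_zero⟩
  add_mem := by
    rintro _ _ ⟨x, hx, rfl⟩ ⟨y, hy, rfl⟩
    exact ⟨x + y, hI.add_mem hx hy, hf.map_add x y⟩
  neg_mem := by
    rintro _ ⟨x, hx, rfl⟩
    exact ⟨-x, hI.neg_mem hx, hf.map_neg x⟩
  add_conj_mem := by
    rintro b _ ⟨x, hx, rfl⟩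
    obtain ⟨c, rfl⟩ := hs b
    exact ⟨c + x + -c, hI.add_conj_mem c hx, by rw [hf.map_add, hf.map_add, hf.map_neg]⟩
  mul_mem := by
    rintro _ _ ⟨x, hx, rfl⟩ ⟨y, hy, rfl⟩
    exact ⟨x * y, hI.mul_mem hx hy, hf.map_mul x y⟩
  inv_mem := by
    rintro _ ⟨x, hx, rfl⟩
    exact ⟨x⁻¹, hI.inv_mem hx, hf.map_inv x⟩
  mul_conj_mem := by
    rintro b _ ⟨x, hx, rfl⟩
    obtain ⟨c, rfl⟩ := hs b
    exact ⟨c * x * c⁻¹, hI.mul_conj_mem c hx, by rw [hf.map_mul, hf.map_mul, hf.map_inv]⟩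
  lmap_mem := by
    rintro b _ ⟨x, hx, rfl⟩
    obtain ⟨c, rfl⟩ := hs b
    exact ⟨lmap c x, hI.lmap_mem c hx, hf.map_lmap c x⟩

theorem isIdeal_preimage {I : Set C} (hI : IsIdeal I) : IsIdeal (f ⁻¹' I) where
  zero_mem := by simpa only [Set.mem_preimage, hf.map_zero] using hI.zero_mem
  add_mem x y hx hy := by
    simpa only [Set.mem_preimage, hf.map_add] using hI.add_mem hx hy
  neg_mem x hx := by
    simpa only [Set.mem_preimage, hf.map_neg] using hI.neg_mem hx
  add_conj_mem b x hx := by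
    simpa only [Set.mem_preimage, hf.map_add, hf.map_neg] using hI.add_conj_mem (f b) hx
  mul_mem x y hx hy := by
    simpa only [Set.mem_preimage, hf.map_mul] using hI.mul_mem hx hy
  inv_mem x hx := by
    simpa only [Set.mem_preimage, hf.map_inv] using hI.inv_mem hx
  mul_conj_mem b x hx := by
    simpa only [Set.mem_preimage, hf.map_mul, hf.map_inv] using hI.mul_conj_mem (f b) hx
  lmap_mem a x hx := by
    simpa only [Set.mem_preimage, hf.map_lmap] using hI.lmap_mem (f a) hx

theorem isStarPowerOf_image {I X : Set A} (h : IsStarPowerOf I X) :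
    IsStarPowerOf (f '' I) (f '' X) := by
  induction h with
  | base => exact .base
  | star _ _ ihX ihY => rw [hf.image_setStar]; exact .star ihX ihY

theorem exists_isStarPowerOf_preimage {I X : Set C} (hI : I ⊆ Set.range f)
    (h : IsStarPowerOf I X) : ∃ X' : Set A, IsStarPowerOf (f ⁻¹' I) X' ∧ f '' X' = X := by
  induction h with
  | base => exact ⟨_, .base, Set.image_preimage_eq_of_subset hI⟩
  | star _ _ ihX ihY =>
    obtain ⟨X', hX', rfl⟩ := ihX
    obtain ⟨Y', hY', rfl⟩ := ihY
    exact ⟨_, .star hX' hY', hf.image_setStar X' Y'⟩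

theorem starPower_ne_zero_of_surjective (hs : Function.Surjective f)
    (hC : StronglySemiprime C) {I : Set A} (hI : IsIdeal I) (hfI : f '' I ≠ {0})
    {X : Set A} (hX : IsStarPowerOf I X) : X ≠ {0} := by
  rintro rfl
  apply hC _ (hf.isIdeal_image hs hI) hfI _ (hf.isStarPowerOf_image hX)
  rw [Set.image_singleton, hf.map_zero]

theorem starPower_ne_zero_of_injective (hinj : Function.Injective f)
    (hA : StronglySemiprime A) {I : Set C} (hI : IsIdeal I) (hrange : I ⊆ Set.range f)
    (hI0 : I ≠ {0}) {X : Set C} (hX : IsStarPowerOf I X) : X ≠ {0} := by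
  have himage_zero : f '' {0} = {0} := by rw [Set.image_singleton, hf.map_zero]
  have hpre0 : f ⁻¹' I ≠ {0} := by
    rintro h
    rw [← Set.image_preimage_eq_of_subset hrange, h, himage_zero] at hI0
    exact hI0 rfl
  obtain ⟨X', hX', rfl⟩ := hf.exists_isStarPowerOf_preimage hrange hX
  rw [← himage_zero, (Set.image_injective.mpr hinj).ne_iff]
  exact hA _ (hf.isIdeal_preimage hI) hpre0 _ hX'

end IsBraceHom

namespace BraceActionHom

variable {B₁ B₂ : Type*} [SkewLeftBrace B₁] [SkewLeftBrace B₂] (α : BraceActionHom B₂ B₁)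

theorem isBraceHom_snd : @IsBraceHom _ _ α.sdp _ SDP.snd :=
  @IsBraceHom.mk _ _ α.sdp _ _ (fun _ _ => rfl) (fun _ _ => rfl)

theorem isBraceHom_inl : @IsBraceHom _ _ _ α.sdp fun x : B₁ => (⟨x, 0⟩ : SDP B₁ B₂) := by
  let := α.sdp
  have h01 : (0 : B₂) = 1 := zero_eq_one
  refine ⟨fun x y => SDP.ext rfl (add_zero 0).symm, fun x y => SDP.ext ?_ ?_⟩
  · show x * y = x * α.act 0 y
    rw [h01, α.act_one]
  · show (0 : B₂) = 0 * 0
    rw [h01, one_mul]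

end BraceActionHom

end SkewLeftBrace

/-- The semidirect product of strongly semiprime skew left braces is strongly
semiprime. -/
theorem sdp_stronglySemiprime {B₁ B₂ : Type*} [SkewLeftBrace B₁] [SkewLeftBrace B₂]
    (h₁ : SkewLeftBrace.StronglySemiprime B₁)
    (h₂ : SkewLeftBrace.StronglySemiprime B₂)
    (α : BraceActionHom B₂ B₁) :
    @SkewLeftBrace.StronglySemiprime _ α.sdp := by
  let := α.sdp
  intro I hI hI0 X hX
  by_cases hsnd : SDP.snd '' I = {0}
  · have hrange : I ⊆ Set.range fun x : B₁ => (⟨x, 0⟩ : SDP B₁ B₂) := by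
      intro p hp
      have hp₂ : p.snd ∈ SDP.snd '' I := ⟨p, hp, rfl⟩
      rw [hsnd] at hp₂
      exact ⟨p.fst, SDP.ext rfl hp₂.symm⟩
    exact α.isBraceHom_inl.starPower_ne_zero_of_injective (fun _ _ h => congrArg SDP.fst h)
      h₁ hI hrange hI0 hX
  · exact α.isBraceHom_snd.starPower_ne_zero_of_surjective (fun b => ⟨⟨0, b⟩, rfl⟩)
      h₂ hI hsnd hX
end
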